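/- arXiv:1511.03547 — 2 statements merged into one kernel-verified Lean document; each statement's English description precedes it below -/
import Mathlib

section
/- Let J ⊂ S be a quasi-stable monomial ideal with Pommaret basis P(J) = {x^{α(1)},…,x^{α(m)}} and let G = {f_{α(1)},…,f_{α(m)}} be a P(J)-marked basis generating the ideal I. Then every polynomial f ∈ I can be written uniquely in the form f = Σ_{l=1}^m P_l f_{α(l)} with each coefficient P_l a polynomial with variables only among the multiplicative variables of x^{α(l)}. -/
open MvPolynomial

namespace MB

/-- Exponent (multi-index) of a term in the variables `x_0, …, x_n`. -/
abbrev Exp (n : ℕ) := Fin (n+1) →₀ ℕ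

variable {n : ℕ}

/-- Total degree of a term. -/
def degE (α : Exp n) : ℕ := α.sum fun _ e => e

/-- `x_i` is a multiplicative variable for the term `x^α`, i.e. `x_i ≤ min(x^α)`. -/
def mult (α : Exp n) (i : Fin (n+1)) : Prop := ∀ j ∈ α.support, i ≤ j

/-- Every variable occurring in `x^δ` is multiplicative for `x^α`. -/
def multExp (α δ : Exp n) : Prop := ∀ i ∈ δ.support, mult α i

/-- Pommaret cone of a term. -/
def pommaretCone (α : Exp n) : Set (Exp n) := {γ | ∃ δ, multExp α δ ∧ γ = α + δ}

/-- A set of terms is (the set of terms of) a monomial ideal. -/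
def IsMonomialIdeal (T : Set (Exp n)) : Prop := ∀ α ∈ T, ∀ β, α + β ∈ T

/-- `P` is a Pommaret basis of the set of terms `T`: the terms of `T` are the
disjoint union of the Pommaret cones of the elements of `P`. -/
def IsPommaretBasis (P : Finset (Exp n)) (T : Set (Exp n)) : Prop :=
  (∀ γ, γ ∈ T ↔ ∃ α ∈ P, γ ∈ pommaretCone α) ∧
  ∀ γ : Exp n, ∀ α ∈ P, ∀ β ∈ P, γ ∈ pommaretCone α → γ ∈ pommaretCone β → α = β

/-- Lexicographic order on terms (with `x_n > … > x_0` significance). -/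
def lexLt (η δ : Exp n) : Prop := ∃ i, η i < δ i ∧ ∀ j, i < j → η j = δ j

/-- Terms of the saturation `(J : (x_0,…,x_n)^∞)` of a monomial ideal. -/
def satTerms (T : Set (Exp n)) : Set (Exp n) :=
  {α | ∃ j : ℕ, ∀ β : Exp n, degE β = j → α + β ∈ T}

section ModuleDefs

variable (A : Type*) [CommRing A] {κ : Type*} [Fintype κ] [DecidableEq κ]

/-- The term `x^α e_k` of the free module. -/
noncomputable def termV (α : Exp n) (k : κ) : κ → MvPolynomial (Fin (n+1)) A :=
  Pi.single k (monomial α 1)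

variable {A}

/-- Homogeneity of degree `s` in `S^m_d` (with weight vector `d`). -/
def IsHomogV (d : κ → ℤ) (f : κ → MvPolynomial (Fin (n+1)) A) (s : ℤ) : Prop :=
  ∀ k, ∀ β ∈ (f k).support, (degE β : ℤ) + d k = s

variable (A)

/-- The degree-`s` component `(S^m_d)_s` as an `A`-submodule. -/
noncomputable def homogCompV (d : κ → ℤ) (s : ℤ) :
    Submodule A (κ → MvPolynomial (Fin (n+1)) A) where
  carrier := {f | IsHomogV d f s}
  add_mem' := by
    intro f g hf hg k β hβ
    rcases Finset.mem_union.mp (MvPolynomial.support_add hβ) with h | h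
    · exact hf k β h
    · exact hg k β h
  zero_mem' := by intro k β hβ; simp at hβ
  smul_mem' := by
    intro a f hf k β hβ
    exact hf k β (MvPolynomial.support_smul hβ)

/-- The set `N(U)` of terms of `S^m_d` not belonging to the monomial module `U = ⊕ J^(k) e_k`. -/
def NUTerms (J : κ → Set (Exp n)) : Set (κ → MvPolynomial (Fin (n+1)) A) :=
  {v | ∃ k, ∃ α, α ∉ J k ∧ v = termV A α k}

/-- The degree-`s` part `N(U)_s`. -/
def NUTermsDeg (d : κ → ℤ) (J : κ → Set (Exp n)) (s : ℤ) :
    Set (κ → MvPolynomial (Fin (n+1)) A) :=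
  {v | ∃ k, ∃ α, α ∉ J k ∧ (degE α : ℤ) + d k = s ∧ v = termV A α k}

variable {A}

/-- A `P(U)`-marked set: for each `x^α e_k` with `α ∈ P k`, the element `g α k` has
head term `x^α e_k` (coefficient `1`) and all other terms in `N(U)` of the same degree. -/
def IsMarkedSetV (d : κ → ℤ) (J : κ → Set (Exp n)) (P : κ → Finset (Exp n))
    (g : Exp n → κ → (κ → MvPolynomial (Fin (n+1)) A)) : Prop :=
  ∀ k, ∀ α ∈ P k, ∀ l, ∀ β ∈ ((g α k - termV A α k) l).support,
    β ∉ J l ∧ (degE β : ℤ) + d l = (degE α : ℤ) + d k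

/-- The underlying set of elements of the marked set `G`. -/
def GSet (P : κ → Finset (Exp n)) (g : Exp n → κ → (κ → MvPolynomial (Fin (n+1)) A)) :
    Set (κ → MvPolynomial (Fin (n+1)) A) :=
  {v | ∃ k, ∃ α ∈ P k, v = g α k}

/-- The set `G^(s)` of multiplicative multiples of elements of `G` of degree `s`. -/
def GSdeg (d : κ → ℤ) (P : κ → Finset (Exp n))
    (g : Exp n → κ → (κ → MvPolynomial (Fin (n+1)) A)) (s : ℤ) :
    Set (κ → MvPolynomial (Fin (n+1)) A) :=
  {v | ∃ k, ∃ α ∈ P k, ∃ δ : Exp n, multExp α δ ∧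
    (degE δ : ℤ) + (degE α : ℤ) + d k = s ∧ v = (monomial δ (1:A)) • g α k}

/-- The `S`-submodule `⟨G⟩` generated by the marked set. -/
noncomputable def GmodS (P : κ → Finset (Exp n))
    (g : Exp n → κ → (κ → MvPolynomial (Fin (n+1)) A)) :
    Submodule (MvPolynomial (Fin (n+1)) A) (κ → MvPolynomial (Fin (n+1)) A) :=
  Submodule.span _ (GSet P g)

/-- The degree-`s` component `⟨G⟩_s` as an `A`-submodule. -/
noncomputable def GmodDeg (d : κ → ℤ) (P : κ → Finset (Exp n))
    (g : Exp n → κ → (κ → MvPolynomial (Fin (n+1)) A)) (s : ℤ) :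
    Submodule A (κ → MvPolynomial (Fin (n+1)) A) :=
  (GmodS P g).restrictScalars A ⊓ homogCompV A d s

/-- `G` is a marked basis: `(S^m_d)_s = ⟨G⟩_s ⊕ ⟨N(U)_s⟩^A` for every degree `s`. -/
def MarkedBasisProp (d : κ → ℤ) (J : κ → Set (Exp n)) (P : κ → Finset (Exp n))
    (g : Exp n → κ → (κ → MvPolynomial (Fin (n+1)) A)) : Prop :=
  ∀ s : ℤ,
    homogCompV A d s = GmodDeg d P g s ⊔ Submodule.span A (NUTermsDeg A d J s) ∧
    GmodDeg d P g s ⊓ Submodule.span A (NUTermsDeg A d J s) = ⊥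

/-- One step of the reduction relation `→_G`. -/
def RedStep (P : κ → Finset (Exp n)) (g : Exp n → κ → (κ → MvPolynomial (Fin (n+1)) A))
    (h h' : κ → MvPolynomial (Fin (n+1)) A) : Prop :=
  ∃ k, ∃ α ∈ P k, ∃ η : Exp n, multExp α η ∧
    (h k).coeff (η + α) ≠ 0 ∧
    h' = h - ((h k).coeff (η + α)) • ((monomial η (1:A)) • g α k)

end ModuleDefs

section IdealDefs

variable {A : Type*} [CommRing A]

/-- A `P(J)`-marked set of polynomials. -/
def IsMarkedSetI (T : Set (Exp n)) (P : Finset (Exp n))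
    (g : Exp n → MvPolynomial (Fin (n+1)) A) : Prop :=
  ∀ α ∈ P, ∀ β ∈ (g α - monomial α (1:A)).support, β ∉ T ∧ degE β = degE α

variable (A)

/-- The degree-`s` monomials not in `T`. -/
def NTermsDegI (T : Set (Exp n)) (s : ℕ) : Set (MvPolynomial (Fin (n+1)) A) :=
  {p | ∃ β, β ∉ T ∧ degE β = s ∧ p = monomial β (1:A)}

variable {A}

/-- Degree-`s` part of the ideal generated by the marked set. -/
noncomputable def IdealDegI (P : Finset (Exp n)) (g : Exp n → MvPolynomial (Fin (n+1)) A)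
    (s : ℕ) : Submodule A (MvPolynomial (Fin (n+1)) A) :=
  (Ideal.span (g '' ↑P)).restrictScalars A ⊓ homogeneousSubmodule (Fin (n+1)) A s

/-- A `P(J)`-marked basis of polynomials: `S_s = (G)_s ⊕ ⟨N(J)_s⟩^A` for all `s`. -/
def IsMarkedBasisI (T : Set (Exp n)) (P : Finset (Exp n))
    (g : Exp n → MvPolynomial (Fin (n+1)) A) : Prop :=
  IsMarkedSetI T P g ∧ ∀ s : ℕ,
    homogeneousSubmodule (Fin (n+1)) A s
      = IdealDegI P g s ⊔ Submodule.span A (NTermsDegI A T s) ∧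
    IdealDegI P g s ⊓ Submodule.span A (NTermsDegI A T s) = ⊥

/-- The polynomial `p` involves only multiplicative variables of `x^α`. -/
def multPoly (α : Exp n) (p : MvPolynomial (Fin (n+1)) A) : Prop :=
  ∀ β ∈ p.support, multExp α β

end IdealDefs

section SyzDefs

variable {A : Type*} [CommRing A]

/-- The map `(c_l) ↦ Σ_l c_l f_{α(l)}` whose kernel is `Syz(G)`. -/
noncomputable def syzMap (P : Finset (Exp n)) (g : Exp n → MvPolynomial (Fin (n+1)) A) :
    (↥P → MvPolynomial (Fin (n+1)) A) →ₗ[MvPolynomial (Fin (n+1)) A]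
      MvPolynomial (Fin (n+1)) A where
  toFun c := ∑ l : ↥P, c l * g l.1
  map_add' c c' := by simp [add_mul, Finset.sum_add_distrib]
  map_smul' a c := by simp [Finset.mul_sum, mul_assoc]

/-- Weight vector for the syzygy module: `d_l = deg x^{α(l)}`. -/
def ddeg (P : Finset (Exp n)) : ↥P → ℤ := fun l => (degE l.1 : ℤ)

/-- Terms of the monomial ideal generated by the nonmultiplicative variables of `x^{α(l)}`. -/
def Jsyz (P : Finset (Exp n)) : ↥P → Set (Exp n) :=
  fun l => {β | ∃ i ∈ β.support, ¬ mult (l : Exp n) i}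

open Classical in
/-- The claimed Pommaret basis `{x_i e_l : x_i nonmultiplicative for x^{α(l)}}`. -/
noncomputable def Psyz (P : Finset (Exp n)) : ↥P → Finset (Exp n) := fun l =>
  (Finset.univ.filter fun i : Fin (n+1) => ¬ mult (l : Exp n) i).image
    fun i => Finsupp.single i 1

open Classical in
/-- The syzygy `S_{k;i} = x_i e_k − Σ_l P_l^{k;i} e_l`. -/
noncomputable def Ssyz (P : Finset (Exp n))
    (Pc : ↥P → Fin (n+1) → ↥P → MvPolynomial (Fin (n+1)) A)
    (k : ↥P) (i : Fin (n+1)) : ↥P → MvPolynomial (Fin (n+1)) A :=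
  fun l => (if l = k then (X i : MvPolynomial (Fin (n+1)) A) else 0) - Pc k i l

/-- The set `G_Syz^(s)`. -/
def GSyzDeg (P : Finset (Exp n))
    (Pc : ↥P → Fin (n+1) → ↥P → MvPolynomial (Fin (n+1)) A) (s : ℤ) :
    Set (↥P → MvPolynomial (Fin (n+1)) A) :=
  {v | ∃ k : ↥P, ∃ i : Fin (n+1), ¬ mult (k : Exp n) i ∧ ∃ δ : Exp n,
    (∀ j ∈ δ.support, j ≤ i) ∧ (degE δ : ℤ) + 1 + ddeg P k = s ∧
    v = (monomial δ (1:A)) • Ssyz P Pc k i}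

end SyzDefs

/-!
Every term of `J` is `x^(α+δ)` for a unique `x^α ∈ P(J)` with `x^δ` multiplicative for `x^α`.
The combinatorial core (`lexLt_of_add_eq_add`): if `x^μ x^β = x^δ x^α` with `x^α ∈ J`, `x^δ`
multiplicative for `x^α` and `x^β ∉ J`, then `x^δ <_lex x^μ`.

Existence: writing `x^(α+δ) = x^δ f_α - x^δ (f_α - x^α)`, every term of `x^δ (f_α - x^α)` is
outside `J` or lies in a Pommaret cone with a lex-smaller multiplier, so well-founded recursion
gives `S = ⟨multiplicative representations⟩ + ⟨N(J)⟩^A`. For `f ∈ (G)` the `N(J)`-part lies in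
`(G) ∩ ⟨N(J)⟩^A`, which vanishes degreewise since `G` is a marked basis.

Uniqueness: in a representation `0 = Σ P_α f_α`, let `x^δ` be the lex-largest term of the
coefficients, occurring in `P_α`. By the core fact and the disjointness of the Pommaret cones,
the coefficient of `x^(α+δ)` in the sum is the coefficient of `x^δ` in `P_α`, so it is zero.
-/

section Polynomial

variable {σ R : Type*} [CommRing R]

lemma monomial_mul_mem_of_forall {M : Submodule R (MvPolynomial σ R)} (δ : σ →₀ ℕ)
    {p : MvPolynomial σ R} (h : ∀ β ∈ p.support, monomial (δ + β) (1 : R) ∈ M) :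
    monomial δ 1 * p ∈ M := by
  rw [p.as_sum, Finset.mul_sum]
  refine Submodule.sum_mem _ fun β hβ => ?_
  rw [monomial_mul, one_mul, ← mul_one (coeff β p), ← smul_eq_mul, ← smul_monomial]
  exact Submodule.smul_mem _ _ (h β hβ)

lemma coeff_mul_eq_zero_of_forall {p q : MvPolynomial σ R} {γ : σ →₀ ℕ}
    (h : ∀ μ ∈ p.support, ∀ β ∈ q.support, μ + β ≠ γ) : coeff γ (p * q) = 0 := by
  classical
  rw [coeff_mul]
  refine Finset.sum_eq_zero fun x hx => ?_
  by_contra hne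
  exact h x.1 (mem_support_iff.mpr (left_ne_zero_of_mul hne)) x.2
    (mem_support_iff.mpr (right_ne_zero_of_mul hne))
    (Finset.HasAntidiagonal.mem_antidiagonal.mp hx)

end Polynomial

section Lex

variable {n : ℕ}

-- `lexLt` is the lexicographic order on `(Fin (n+1))ᵒᵈ → ℕ`: `x_n` is the most significant.
def lexKey (α : Exp n) : Lex ((Fin (n+1))ᵒᵈ → ℕ) := toLex fun i => α (OrderDual.ofDual i)

lemma lexLt_iff_lexKey_lt {η δ : Exp n} : lexLt η δ ↔ lexKey η < lexKey δ :=
  ⟨fun ⟨i, hlt, heq⟩ => ⟨OrderDual.toDual i, fun _ hj => heq _ hj, hlt⟩,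
   fun ⟨i, heq, hlt⟩ => ⟨OrderDual.ofDual i, hlt, fun j hj => heq (OrderDual.toDual j) hj⟩⟩

lemma lexKey_injective : Function.Injective (lexKey (n := n)) := fun _ _ h =>
  Finsupp.ext fun i => congrFun (toLex.injective h) (OrderDual.toDual i)

lemma lexLt_wellFounded : WellFounded (lexLt : Exp n → Exp n → Prop) :=
  Subrelation.wf lexLt_iff_lexKey_lt.mp (InvImage.wf lexKey wellFounded_lt)

lemma le_of_lexLt_of_multExp {α δ μ β : Exp n} (hδ : multExp α δ) (hμδ : lexLt μ δ)
    (heq : μ + β = δ + α) : α ≤ β := by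
  obtain ⟨i, hi, habove⟩ := hμδ
  have hα : ∀ j ∈ α.support, i ≤ j := hδ i (Finsupp.mem_support_iff.mpr (by omega))
  intro j
  have hj : μ j + β j = δ j + α j := by simpa using DFunLike.congr_fun heq j
  rcases lt_trichotomy j i with hji | rfl | hij
  · have : α j = 0 := Finsupp.notMem_support_iff.mp fun h => (hα j h).not_gt hji
    omega
  · omega
  · have := habove j hij
    omega

theorem lexLt_of_add_eq_add {T : Set (Exp n)} (hT : IsMonomialIdeal T) {α δ μ β : Exp n}
    (hα : α ∈ T) (hδ : multExp α δ) (hβ : β ∉ T) (heq : μ + β = δ + α) : lexLt δ μ := by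
  rw [lexLt_iff_lexKey_lt]
  rcases lt_trichotomy (lexKey δ) (lexKey μ) with h | h | h
  · exact h
  · obtain rfl := lexKey_injective h
    exact absurd (add_left_cancel heq ▸ hα) hβ
  · obtain ⟨ρ, rfl⟩ := le_iff_exists_add.mp
      (le_of_lexLt_of_multExp hδ (lexLt_iff_lexKey_lt.mpr h) heq)
    exact absurd (hT α hα ρ) hβ

end Lex

section MarkedSet

variable {n : ℕ} {A : Type*} [CommRing A] {T : Set (Exp n)} {P : Finset (Exp n)}
  {g : Exp n → MvPolynomial (Fin (n+1)) A}

lemma IsPommaretBasis.subset (hP : IsPommaretBasis P T) : (P : Set (Exp n)) ⊆ T := fun α hα =>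
  (hP.1 α).mpr ⟨α, hα, 0, fun i hi => by simp at hi, by simp⟩

lemma IsMarkedSetI.mem_support (hG : IsMarkedSetI T P g) {α : Exp n} (hα : α ∈ P) {ν : Exp n}
    (hν : ν ∈ (g α).support) : ν = α ∨ (ν ∉ T ∧ degE ν = degE α) := by
  refine or_iff_not_imp_left.mpr fun hνα => hG α hα ν ?_
  rw [MvPolynomial.mem_support_iff] at hν ⊢
  rwa [coeff_sub, coeff_monomial, if_neg (Ne.symm hνα), sub_zero]

lemma IsMarkedSetI.isHomogeneous (hG : IsMarkedSetI T P g) {α : Exp n} (hα : α ∈ P) :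
    (g α).IsHomogeneous (degE α) := by
  rw [← mem_homogeneousSubmodule, homogeneousSubmodule_eq_finsupp_supported]
  intro ν hν
  rcases hG.mem_support hα hν with rfl | h
  exacts [rfl, h.2]

attribute [local instance] MvPolynomial.gradedAlgebra in
lemma IsMarkedSetI.homogeneousComponent_mem_span (hG : IsMarkedSetI T P g)
    {f : MvPolynomial (Fin (n+1)) A} (hf : f ∈ Ideal.span (g '' P)) (s : ℕ) :
    homogeneousComponent s f ∈ Ideal.span (g '' P) := by
  refine homogeneousComponent_mem_of_mem (Ideal.homogeneous_span _ _ ?_) hf s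
  rintro _ ⟨α, hα, rfl⟩
  exact ⟨degE α, hG.isHomogeneous hα⟩

lemma span_NTermsDegI (s : ℕ) :
    Submodule.span A (NTermsDegI A T s) = restrictSupport A {β | β ∉ T ∧ degE β = s} := by
  rw [restrictSupport_eq_span]
  congr 1
  ext p
  constructor
  · rintro ⟨β, hβ, hs, rfl⟩
    exact ⟨β, ⟨hβ, hs⟩, rfl⟩
  · rintro ⟨β, ⟨hβ, hs⟩, rfl⟩
    exact ⟨β, hβ, hs, rfl⟩

lemma IsMarkedSetI.eq_zero_of_mem_restrictSupport (hG : IsMarkedSetI T P g)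
    (hbot : ∀ s, IdealDegI P g s ⊓ Submodule.span A (NTermsDegI A T s) = ⊥)
    {v : MvPolynomial (Fin (n+1)) A} (hvI : v ∈ Ideal.span (g '' P))
    (hvN : v ∈ restrictSupport A Tᶜ) : v = 0 := by
  have hcomp (s : ℕ) : homogeneousComponent s v = 0 := by
    rw [← Submodule.mem_bot A, ← hbot s, span_NTermsDegI]
    refine ⟨⟨hG.homogeneousComponent_mem_span hvI s, homogeneousComponent_mem s v⟩, ?_⟩
    show _ ∈ restrictSupport A _
    rw [mem_restrictSupport_iff, support_homogeneousComponent]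
    intro β hβ
    rw [Finset.coe_filter] at hβ
    exact ⟨hvN hβ.1, hβ.2⟩
  rw [← sum_homogeneousComponent v]
  exact Finset.sum_eq_zero fun s _ => hcomp s

end MarkedSet

section Representation

variable {n : ℕ} {A : Type*} [CommRing A] {T : Set (Exp n)} {P : Finset (Exp n)}
  {g : Exp n → MvPolynomial (Fin (n+1)) A}

lemma multPoly_iff_mem_restrictSupport {α : Exp n} {p : MvPolynomial (Fin (n+1)) A} :
    multPoly α p ↔ p ∈ restrictSupport A {β | multExp α β} := Iff.rfl

def IsMultRep (P : Finset (Exp n)) (g : Exp n → MvPolynomial (Fin (n+1)) A)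
    (f : MvPolynomial (Fin (n+1)) A) (c : Exp n → MvPolynomial (Fin (n+1)) A) : Prop :=
  (∀ α ∉ P, c α = 0) ∧ (∀ α ∈ P, multPoly α (c α)) ∧ f = ∑ α ∈ P, c α * g α

namespace IsMultRep

variable {f f' : MvPolynomial (Fin (n+1)) A} {c c' : Exp n → MvPolynomial (Fin (n+1)) A}

lemma zero : IsMultRep P g 0 0 :=
  ⟨fun _ _ => rfl, fun _ _ => multPoly_iff_mem_restrictSupport.mpr (zero_mem _), by simp⟩

lemma add (h : IsMultRep P g f c) (h' : IsMultRep P g f' c') :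
    IsMultRep P g (f + f') (c + c') := by
  refine ⟨fun α hα => by simp [h.1 α hα, h'.1 α hα], fun α hα => ?_, ?_⟩
  · simp only [multPoly_iff_mem_restrictSupport, Pi.add_apply] at *
    exact add_mem (h.2.1 α hα) (h'.2.1 α hα)
  · simp [h.2.2, h'.2.2, add_mul, Finset.sum_add_distrib]

lemma smul (a : A) (h : IsMultRep P g f c) : IsMultRep P g (a • f) (a • c) := by
  refine ⟨fun α hα => by simp [h.1 α hα], fun α hα => ?_, ?_⟩
  · simp only [multPoly_iff_mem_restrictSupport, Pi.smul_apply] at *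
    exact Submodule.smul_mem _ a (h.2.1 α hα)
  · simp [h.2.2, Finset.smul_sum]

lemma sub (h : IsMultRep P g f c) (h' : IsMultRep P g f' c') :
    IsMultRep P g (f - f') (c - c') := by
  simpa [sub_eq_add_neg] using h.add (h'.smul (-1))

lemma single [DecidableEq (Exp n)] {α : Exp n} (hα : α ∈ P) {q : MvPolynomial (Fin (n+1)) A}
    (hq : multPoly α q) : IsMultRep P g (q * g α) (Pi.single α q) := by
  refine ⟨fun β hβ => Pi.single_eq_of_ne (ne_of_mem_of_not_mem hα hβ).symm _, fun β _ => ?_, ?_⟩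
  · rcases eq_or_ne β α with rfl | hβα
    · simpa using hq
    · rw [Pi.single_eq_of_ne hβα]
      exact multPoly_iff_mem_restrictSupport.mpr (zero_mem _)
  · simp [Pi.single_apply, hα]

end IsMultRep

variable (P g) in
def multRepSubmodule : Submodule A (MvPolynomial (Fin (n+1)) A) where
  carrier := {f | ∃ c, IsMultRep P g f c}
  zero_mem' := ⟨0, .zero⟩
  add_mem' := fun ⟨c, hc⟩ ⟨c', hc'⟩ => ⟨c + c', hc.add hc'⟩
  smul_mem' a _ := fun ⟨c, hc⟩ => ⟨a • c, hc.smul a⟩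

lemma IsMultRep.mem_span {f : MvPolynomial (Fin (n+1)) A}
    {c : Exp n → MvPolynomial (Fin (n+1)) A} (h : IsMultRep P g f c) : f ∈ Ideal.span (g '' P) := by
  rw [h.2.2]
  exact Ideal.sum_mem _ fun α hα => Ideal.mul_mem_left _ _ (Ideal.subset_span ⟨α, hα, rfl⟩)

lemma multPoly_monomial {α δ : Exp n} (hδ : multExp α δ) (a : A) : multPoly α (monomial δ a) :=
  fun _ hβ => Finset.mem_singleton.mp (support_monomial_subset hβ) ▸ hδ

theorem monomial_mem_multRepSubmodule_sup (hT : IsMonomialIdeal T) (hP : IsPommaretBasis P T)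
    (hG : IsMarkedSetI T P g) (δ : Exp n) :
    ∀ α ∈ P, multExp α δ →
      monomial (α + δ) (1 : A) ∈ multRepSubmodule P g ⊔ restrictSupport A Tᶜ := by
  classical
  induction δ using lexLt_wellFounded.induction with
  | _ δ ih =>
  intro α hα hδ
  have hsplit : monomial (α + δ) (1 : A)
      = monomial δ 1 * g α - monomial δ 1 * (g α - monomial α 1) := by
    rw [mul_sub, sub_sub_cancel, monomial_mul, one_mul, add_comm δ α]
  rw [hsplit]
  refine sub_mem (Submodule.mem_sup_left ⟨_, IsMultRep.single hα (multPoly_monomial hδ 1)⟩)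
    (monomial_mul_mem_of_forall δ fun β hβ => ?_)
  by_cases hδβ : δ + β ∈ T
  · obtain ⟨α', hα', δ', hδ', heq⟩ := (hP.1 _).mp hδβ
    rw [heq]
    exact ih δ' (lexLt_of_add_eq_add hT (hP.subset hα') hδ' (hG α hα β hβ).1
      (heq.trans (add_comm _ _))) α' hα' hδ'
  · exact Submodule.mem_sup_right ((monomial_mem_restrictSupport A).mpr (Or.inl hδβ))

theorem multRepSubmodule_sup_restrictSupport_compl_eq_top (hT : IsMonomialIdeal T)
    (hP : IsPommaretBasis P T) (hG : IsMarkedSetI T P g) :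
    multRepSubmodule P g ⊔ restrictSupport A Tᶜ = ⊤ := by
  rw [eq_top_iff, ← restrictSupport_univ, restrictSupport_eq_span, Submodule.span_le]
  rintro _ ⟨γ, -, rfl⟩
  by_cases hγ : γ ∈ T
  · obtain ⟨α, hα, δ, hδ, rfl⟩ := (hP.1 γ).mp hγ
    exact monomial_mem_multRepSubmodule_sup hT hP hG δ α hα hδ
  · exact Submodule.mem_sup_right ((monomial_mem_restrictSupport A).mpr (Or.inl hγ))

theorem exists_isMultRep_of_mem_span (hT : IsMonomialIdeal T) (hP : IsPommaretBasis P T)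
    (hG : IsMarkedBasisI T P g) {f : MvPolynomial (Fin (n+1)) A}
    (hf : f ∈ Ideal.span (g '' P)) : ∃ c, IsMultRep P g f c := by
  have hf' : f ∈ multRepSubmodule P g ⊔ restrictSupport A Tᶜ := by
    rw [multRepSubmodule_sup_restrictSupport_compl_eq_top hT hP hG.1]; trivial
  obtain ⟨r, ⟨c, hc⟩, v, hv, rfl⟩ := Submodule.mem_sup.mp hf'
  have hvI : v ∈ Ideal.span (g '' P) := by
    simpa using Ideal.sub_mem _ hf hc.mem_span
  obtain rfl := hG.1.eq_zero_of_mem_restrictSupport (fun s => (hG.2 s).2) hvI hv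
  exact ⟨c, by simpa using hc⟩

lemma IsMarkedSetI.coeff_mul_of_forall_lexKey_le (hT : IsMonomialIdeal T)
    (hP : IsPommaretBasis P T) (hG : IsMarkedSetI T P g) {α₀ δ₀ α : Exp n} (hα₀ : α₀ ∈ P)
    (hδ₀ : multExp α₀ δ₀) (hα : α ∈ P) {p : MvPolynomial (Fin (n+1)) A} (hp : multPoly α p)
    (hmax : ∀ μ ∈ p.support, lexKey μ ≤ lexKey δ₀) :
    coeff (α₀ + δ₀) (p * g α) = if α = α₀ then coeff δ₀ p else 0 := by
  classical
  have htail : coeff (α₀ + δ₀) (p * (g α - monomial α 1)) = 0 := by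
    refine coeff_mul_eq_zero_of_forall fun μ hμ β hβ heq => (hmax μ hμ).not_gt ?_
    exact lexLt_iff_lexKey_lt.mp (lexLt_of_add_eq_add hT (hP.subset hα₀) hδ₀ (hG α hα β hβ).1
      (heq.trans (add_comm _ _)))
  have hhead : coeff (α₀ + δ₀) (p * monomial α 1) = if α = α₀ then coeff δ₀ p else 0 := by
    rw [coeff_mul_monomial', mul_one]
    split_ifs with hle hαα₀ hαα₀
    · subst hαα₀
      rw [add_tsub_cancel_left]
    · by_contra hne
      refine hαα₀ (hP.2 (α₀ + δ₀) α hα α₀ hα₀ ⟨_, hp _ (mem_support_iff.mpr hne), ?_⟩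
        ⟨δ₀, hδ₀, rfl⟩)
      exact (add_tsub_cancel_of_le hle).symm
    · subst hαα₀
      exact absurd le_self_add hle
    · rfl
  rw [← add_sub_cancel (monomial α 1) (g α), mul_add, coeff_add, hhead, htail, add_zero]

lemma IsMultRep.eq_zero (hT : IsMonomialIdeal T) (hP : IsPommaretBasis P T)
    (hG : IsMarkedSetI T P g) {c : Exp n → MvPolynomial (Fin (n+1)) A}
    (hc : IsMultRep P g 0 c) : c = 0 := by
  classical
  by_contra hne
  obtain ⟨α₀, hα₀⟩ := Function.ne_iff.mp hne
  have hα₀P : α₀ ∈ P := by_contra fun h => hα₀ (hc.1 α₀ h)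
  set D := P.biUnion fun α => (c α).support
  have hD : D.Nonempty := by
    obtain ⟨μ, hμ⟩ := support_nonempty.mpr hα₀
    exact ⟨μ, Finset.mem_biUnion.mpr ⟨α₀, hα₀P, hμ⟩⟩
  obtain ⟨δ₁, hδ₁D, hmax⟩ := D.exists_max_image lexKey hD
  obtain ⟨α₁, hα₁, hδ₁⟩ := Finset.mem_biUnion.mp hδ₁D
  have key : coeff (α₁ + δ₁) (∑ α ∈ P, c α * g α) = coeff δ₁ (c α₁) := by
    rw [coeff_sum, Finset.sum_congr rfl fun α hα => hG.coeff_mul_of_forall_lexKey_le hT hP hα₁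
      (hc.2.1 α₁ hα₁ δ₁ hδ₁) hα (hc.2.1 α hα)
      fun μ hμ => hmax μ (Finset.mem_biUnion.mpr ⟨α, hα, hμ⟩), Finset.sum_ite_eq', if_pos hα₁]
  rw [← hc.2.2, coeff_zero] at key
  exact mem_support_iff.mp hδ₁ key.symm

lemma IsMultRep.unique (hT : IsMonomialIdeal T) (hP : IsPommaretBasis P T)
    (hG : IsMarkedSetI T P g) {f : MvPolynomial (Fin (n+1)) A}
    {c c' : Exp n → MvPolynomial (Fin (n+1)) A} (h : IsMultRep P g f c)
    (h' : IsMultRep P g f c') : c = c' :=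
  sub_eq_zero.mp ((by simpa using h.sub h' : IsMultRep P g 0 (c - c')).eq_zero hT hP hG)

end Representation

theorem statement14_general {n : ℕ} {A : Type*} [CommRing A]
    (T : Set (Exp n)) (P : Finset (Exp n))
    (hT : IsMonomialIdeal T) (hP : IsPommaretBasis P T)
    (g : Exp n → MvPolynomial (Fin (n+1)) A) (hG : IsMarkedBasisI T P g) :
    ∀ f ∈ Ideal.span (g '' ↑P),
      ∃! c : Exp n → MvPolynomial (Fin (n+1)) A,
        (∀ α ∉ P, c α = 0) ∧ (∀ α ∈ P, multPoly α (c α)) ∧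
        f = ∑ α ∈ P, c α * g α := by
  intro f hf
  obtain ⟨c, hc⟩ := exists_isMultRep_of_mem_span hT hP hG hf
  exact ⟨c, hc, fun c' hc' => IsMultRep.unique hT hP hG.1 hc' hc⟩

/-- Lemma `uniqueStRep`: every `f` in the ideal generated by a
`P(J)`-marked basis `G` has a unique representation `f = Σ_l P_l f_{α(l)}` with each
`P_l` involving only the multiplicative variables of `x^{α(l)}`. -/
theorem statement14 {n : ℕ} {A : Type*} [CommRing A] [IsNoetherianRing A]
    (T : Set (Exp n)) (P : Finset (Exp n))
    (hT : IsMonomialIdeal T) (hP : IsPommaretBasis P T)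
    (g : Exp n → MvPolynomial (Fin (n+1)) A) (hG : IsMarkedBasisI T P g) :
    ∀ f ∈ Ideal.span (g '' ↑P),
      ∃! c : Exp n → MvPolynomial (Fin (n+1)) A,
        (∀ α ∉ P, c α = 0) ∧ (∀ α ∈ P, multPoly α (c α)) ∧
        f = ∑ α ∈ P, c α * g α :=
  statement14_general T P hT hP g hG

end MB
end

section
/- Let J ⊂ S be a quasi-stable monomial ideal with Pommaret basis P(J) = {x^{α(1)},…,x^{α(m)}} and G = {f_{α(1)},…,f_{α(m)}} a P(J)-marked basis. Let U be the monomial submodule U = ⊕_{l=1}^m (X_nonmult(x^{α(l)})) e_l of S^m_d with weight vector d = (deg x^{α(1)},…,deg x^{α(m)}), where (X_nonmult(x^{α(l)})) is the ideal generated by the nonmultiplicative variables of x^{α(l)}. Then U is quasi-stable with Pommaret basis P(U) = {x_i e_l : 1 ≤ l ≤ m, x_i nonmultiplicative for x^{α(l)}}, and the set G_Syz = {S_{k;i}} of syzygies S_{k;i} = x_i e_k − Σ_l P_l^{k;i} e_l, with head terms Ht(S_{k;i}) = x_i e_k, is a P(U)-marked set in S^m_d. -/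
open MvPolynomial

namespace MB

variable {n : ℕ}

section AuxMB
variable {n : ℕ}
-- basic degE lemmas
lemma degE_add (α β : Exp n) : degE (α + β) = degE α + degE β := by
  classical
  simpa [degE] using Finsupp.sum_add_index' (by simp) (by intros; rfl)

lemma degE_single (i : Fin (n+1)) (k : ℕ) : degE (Finsupp.single i k) = k := by
  classical
  simp [degE, Finsupp.sum_single_index]

lemma coord_le_degE (α : Exp n) (m : Fin (n+1)) : α m ≤ degE α := by
  classical
  by_cases h : m ∈ α.support
  · exact Finset.single_le_sum (fun i _ => Nat.zero_le _) h
  · simp [Finsupp.notMem_support_iff.mp h]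


/-- If `γ` is in the cone of `single i 1` then `i` is the maximum of the support of `γ`. -/
lemma cone_single_max {γ : Exp n} {i : Fin (n+1)}
    (h : γ ∈ pommaretCone (Finsupp.single i 1)) :
    i ∈ γ.support ∧ ∀ m ∈ γ.support, m ≤ i := by
  classical
  obtain ⟨δ, hδ, rfl⟩ := h
  constructor
  · rw [Finsupp.mem_support_iff, Finsupp.add_apply, Finsupp.single_apply]
    simp
  · intro m hm
    rw [Finsupp.mem_support_iff, Finsupp.add_apply, Finsupp.single_apply] at hm
    by_cases him : i = m
    · omega
    · simp [him] at hm
      have := hδ m (Finsupp.mem_support_iff.mpr hm) i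
      simp [Finsupp.support_single_ne_zero i (one_ne_zero)] at this
      exact this

open Classical in
lemma partA (α0 : Exp n) :
    IsMonomialIdeal {β : Exp n | ∃ i ∈ β.support, ¬ mult α0 i} ∧
    IsPommaretBasis
      ((Finset.univ.filter fun i : Fin (n+1) => ¬ mult α0 i).image fun i => Finsupp.single i 1)
      {β : Exp n | ∃ i ∈ β.support, ¬ mult α0 i} := by
  classical
  constructor
  · rintro β ⟨i, hi, hnm⟩ β'
    refine ⟨i, ?_, hnm⟩
    have : β i ≠ 0 := Finsupp.mem_support_iff.mp hi
    rw [Finsupp.mem_support_iff, Finsupp.add_apply]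
    omega
  constructor
  · intro γ
    constructor
    · rintro ⟨i, hi, hnm⟩
      have hne : γ.support.Nonempty := ⟨i, hi⟩
      set m := γ.support.max' hne with hm
      have hmmem : m ∈ γ.support := γ.support.max'_mem hne
      have hmax : ∀ j ∈ γ.support, j ≤ m := fun j hj => γ.support.le_max' j hj
      have hnmm : ¬ mult α0 m := by
        intro hmul
        apply hnm
        intro j hj
        exact le_trans (hmax i hi) (hmul j hj)
      refine ⟨Finsupp.single m 1, ?_, γ - Finsupp.single m 1, ?_, ?_⟩
      · exact Finset.mem_image.mpr ⟨m, Finset.mem_filter.mpr ⟨Finset.mem_univ m, hnmm⟩, rfl⟩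
      · intro j hj
        have hjγ : j ∈ γ.support := by
          rw [Finsupp.mem_support_iff] at hj ⊢
          rw [Finsupp.tsub_apply] at hj
          omega
        intro j' hj'
        rw [Finsupp.support_single_ne_zero m one_ne_zero, Finset.mem_singleton] at hj'
        subst hj'
        exact hmax j hjγ
      · ext j
        rw [Finsupp.add_apply, Finsupp.tsub_apply, Finsupp.single_apply]
        have hγm : γ m ≠ 0 := Finsupp.mem_support_iff.mp hmmem
        by_cases hjm : m = j
        · subst hjm; simp; omega
        · simp [hjm]
    · rintro ⟨α, hα, hcone⟩
      obtain ⟨i, hifil, rfl⟩ := Finset.mem_image.mp hα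
      have hi := cone_single_max hcone
      exact ⟨i, hi.1, (Finset.mem_filter.mp hifil).2⟩
  · rintro γ α hα β hβ hcα hcβ
    obtain ⟨i, hifil, rfl⟩ := Finset.mem_image.mp hα
    obtain ⟨i', hifil', rfl⟩ := Finset.mem_image.mp hβ
    have h1 := cone_single_max hcα
    have h2 := cone_single_max hcβ
    have : i = i' := le_antisymm (h2.2 i h1.1) (h1.2 i' h2.1)
    rw [this]

section Core
variable {T : Set (Exp n)} {P : Finset (Exp n)}

noncomputable def clsF (α : Exp n) : Fin (n+1) :=
  if h : α.support.Nonempty then α.support.min' h else 0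

lemma clsF_mem {α : Exp n} (h : α.support.Nonempty) : clsF α ∈ α.support := by
  rw [clsF, dif_pos h]; exact α.support.min'_mem h

lemma clsF_le {α : Exp n} (h : α.support.Nonempty) : ∀ j ∈ α.support, clsF α ≤ j := by
  intro j hj
  rw [clsF, dif_pos h]; exact α.support.min'_le j hj

noncomputable def pdA (hP : IsPommaretBasis P T) (τ : Exp n) (h : τ ∈ T) : Exp n :=
  ((hP.1 τ).mp h).choose

noncomputable def pdD (hP : IsPommaretBasis P T) (τ : Exp n) (h : τ ∈ T) : Exp n :=
  (((hP.1 τ).mp h).choose_spec.2).choose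

lemma pdA_mem (hP : IsPommaretBasis P T) (τ : Exp n) (h : τ ∈ T) : pdA hP τ h ∈ P :=
  ((hP.1 τ).mp h).choose_spec.1

lemma pdD_mult (hP : IsPommaretBasis P T) (τ : Exp n) (h : τ ∈ T) :
    multExp (pdA hP τ h) (pdD hP τ h) :=
  ((((hP.1 τ).mp h).choose_spec.2).choose_spec).1

lemma pd_eq (hP : IsPommaretBasis P T) (τ : Exp n) (h : τ ∈ T) :
    τ = pdA hP τ h + pdD hP τ h :=
  ((((hP.1 τ).mp h).choose_spec.2).choose_spec).2

lemma pd_unique (hP : IsPommaretBasis P T) {α γ : Exp n} (hα : α ∈ P) (hγ : multExp α γ)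
    (h : α + γ ∈ T) : pdA hP (α + γ) h = α ∧ pdD hP (α + γ) h = γ := by
  have h1 : (α + γ) ∈ pommaretCone (pdA hP (α+γ) h) := ⟨pdD hP (α+γ) h, pdD_mult hP _ h, pd_eq hP _ h⟩
  have h2 : (α + γ) ∈ pommaretCone α := ⟨γ, hγ, rfl⟩
  have hAA : pdA hP (α+γ) h = α := hP.2 (α+γ) _ (pdA_mem hP _ h) _ hα h1 h2
  refine ⟨hAA, ?_⟩
  have := pd_eq hP (α+γ) h
  rw [hAA] at this
  exact (add_right_injective α this).symm

/-- The termination measure. -/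
noncomputable def muM (hP : IsPommaretBasis P T) (τ : Exp n) (h : τ ∈ T) : ℕ :=
  (clsF (pdA hP τ h)).1 * (degE τ + 1) + (pdD hP τ h) (clsF (pdA hP τ h))

lemma sub_cone (hP : IsPommaretBasis P T) {α β : Exp n} (hα : α ∈ P)
    (hle : ∀ m, α m ≤ β m) (hm : ∀ i : Fin (n+1), β i ≠ α i → mult α i) : β ∈ T := by
  refine (hP.1 β).mpr ⟨α, hα, β - α, ?_, ?_⟩
  · intro i hi
    apply hm
    rw [Finsupp.mem_support_iff, Finsupp.tsub_apply] at hi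
    have := hle i
    omega
  · ext m
    rw [Finsupp.add_apply, Finsupp.tsub_apply]
    have := hle m
    omega

/-- The key combinatorial lemma: one marked reduction step decreases the measure. -/
lemma edge (hP : IsPommaretBasis P T) {α γ β : Exp n} (hα : α ∈ P) (hγ : multExp α γ)
    (hβ : β ∉ T) (hτ : γ + β ∈ T) :
    muM hP (γ + β) hτ < (clsF α).1 * (degE (γ + β) + 1) + γ (clsF α) := by
  classical
  set ab := pdA hP (γ + β) hτ with hab
  set gb := pdD hP (γ + β) hτ with hgb
  have habP : ab ∈ P := pdA_mem hP _ hτ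
  have hmb : multExp ab gb := pdD_mult hP _ hτ
  have heq : γ + β = ab + gb := pd_eq hP _ hτ
  have hco : ∀ m, γ m + β m = ab m + gb m := by
    intro m
    have := DFunLike.congr_fun heq m
    rwa [Finsupp.add_apply, Finsupp.add_apply] at this
  have hzero_cone : ∀ α' : Exp n, α' ∈ P → α' = 0 → False := by
    intro α' hα' h0
    apply hβ
    refine (hP.1 β).mpr ⟨α', hα', β, ?_, by rw [h0, zero_add]⟩
    intro i _ j hj
    rw [h0] at hj
    simp at hj
  have hαne : α.support.Nonempty := by
    rw [Finsupp.support_nonempty_iff]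
    intro h0
    exact hzero_cone α hα h0
  have habne : ab.support.Nonempty := by
    rw [Finsupp.support_nonempty_iff]
    intro h0
    exact hzero_cone ab habP h0
  set c := clsF α with hc
  set cb := clsF ab with hcb
  have hγ0 : ∀ m, c < m → γ m = 0 := by
    intro m hm
    by_contra h
    exact absurd (hγ m (Finsupp.mem_support_iff.mpr h) c (clsF_mem hαne)) (not_le.mpr hm)
  have hgb0 : ∀ m, cb < m → gb m = 0 := by
    intro m hm
    by_contra h
    exact absurd (hmb m (Finsupp.mem_support_iff.mpr h) cb (clsF_mem habne)) (not_le.mpr hm)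
  have hab0 : ∀ m, m < cb → ab m = 0 := by
    intro m hm
    by_contra h
    exact absurd (clsF_le habne m (Finsupp.mem_support_iff.mpr h)) (not_le.mpr hm)
  have hnotlt : ¬ (c < cb) := by
    intro hlt
    apply hβ
    have hle : ∀ m, ab m ≤ β m := by
      intro m
      rcases lt_trichotomy m cb with h | h | h
      · rw [hab0 m h]; exact Nat.zero_le _
      · have h1 := hco m
        have h2 : γ m = 0 := hγ0 m (by rw [h]; exact hlt)
        omega
      · have h1 := hco m
        have h2 : γ m = 0 := hγ0 m (lt_trans hlt h)
        have h3 : gb m = 0 := hgb0 m h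
        omega
    refine sub_cone hP habP hle ?_
    intro i hne j hj
    have hi : ¬ cb < i := by
      intro hlt'
      apply hne
      have h1 := hco i
      have h2 : γ i = 0 := hγ0 i (lt_trans hlt hlt')
      have h3 : gb i = 0 := hgb0 i hlt'
      omega
    exact le_trans (not_lt.mp hi) (clsF_le habne j hj)
  have hble : cb ≤ c := not_lt.mp hnotlt
  rcases lt_or_eq_of_le hble with hlt | heqc
  · -- cls strictly decreases
    rw [muM]
    have h1 : gb cb ≤ degE (γ + β) := by
      have h2 : gb cb ≤ (γ + β) cb := by
        rw [Finsupp.add_apply]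
        have := hco cb
        omega
      exact le_trans h2 (coord_le_degE _ _)
    have h2 : cb.1 * (degE (γ + β) + 1) + (degE (γ + β) + 1) ≤ c.1 * (degE (γ + β) + 1) := by
      have h3 : (cb.1 + 1) * (degE (γ + β) + 1) ≤ c.1 * (degE (γ + β) + 1) :=
        Nat.mul_le_mul_right _ (by exact_mod_cast Fin.lt_def.mp hlt)
      rwa [add_one_mul] at h3
    rw [← hab, ← hgb, ← hcb]
    omega
  · -- equal cls: the cofactor coordinate strictly decreases
    have hstrict : β c < ab c := by
      by_contra hge
      push_neg at hge
      apply hβ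
      have hle : ∀ m, ab m ≤ β m := by
        intro m
        rcases lt_trichotomy m c with h | h | h
        · rw [hab0 m (by rw [heqc]; exact h)]; exact Nat.zero_le _
        · rw [h]; exact hge
        · have h1 := hco m
          have h2 : γ m = 0 := hγ0 m h
          have h3 : gb m = 0 := hgb0 m (by rw [heqc]; exact h)
          omega
      refine sub_cone hP habP hle ?_
      intro i hne j hj
      have hi : ¬ c < i := by
        intro hlt'
        apply hne
        have h1 := hco i
        have h2 : γ i = 0 := hγ0 i hlt'
        have h3 : gb i = 0 := hgb0 i (by rw [heqc]; exact hlt')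
        omega
      have : cb ≤ j := clsF_le habne j hj
      rw [heqc] at this
      exact le_trans (not_lt.mp hi) (by rw [← heqc] at this ⊢; exact le_trans (le_of_eq rfl) this)
    have hgblt : gb c < γ c := by
      have h1 := hco c
      omega
    rw [muM, ← hab, ← hgb, ← hcb, heqc]
    omega
end Core

-- ==================== new material ====================
section Span
variable {A : Type*} [CommRing A] {T : Set (Exp n)} {P : Finset (Exp n)}

lemma support_monomial_mul {γ : Exp n} {p : MvPolynomial (Fin (n+1)) A} {δ : Exp n}
    (h : δ ∈ (monomial γ (1:A) * p).support) : ∃ β ∈ p.support, δ = γ + β := by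
  classical
  rw [mem_support_iff, coeff_monomial_mul'] at h
  by_cases hle : γ ≤ δ
  · rw [if_pos hle, one_mul] at h
    refine ⟨δ - γ, mem_support_iff.mpr h, ?_⟩
    ext m
    have := Finsupp.le_def.mp hle m
    rw [Finsupp.add_apply, Finsupp.tsub_apply]
    omega
  · rw [if_neg hle] at h
    exact absurd rfl h

lemma gsupp {g : Exp n → MvPolynomial (Fin (n+1)) A} (hGm : IsMarkedSetI T P g)
    {α : Exp n} (hα : α ∈ P) {β : Exp n} (hβ : β ∈ (g α).support) : degE β = degE α := by
  classical
  have : g α = (g α - monomial α 1) + monomial α 1 := by ring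
  rw [this] at hβ
  rcases Finset.mem_union.mp (Finsupp.support_add hβ) with h | h
  · exact (hGm α hα β h).2
  · have := Finsupp.support_single_subset h
    rw [Finset.mem_singleton] at this
    rw [this]

lemma prodsupp {g : Exp n → MvPolynomial (Fin (n+1)) A} (hGm : IsMarkedSetI T P g)
    {α : Exp n} (hα : α ∈ P) (γ : Exp n) {δ : Exp n}
    (hδ : δ ∈ (monomial γ (1:A) * g α).support) : degE δ = degE γ + degE α := by
  obtain ⟨β, hβ, rfl⟩ := support_monomial_mul hδ
  rw [degE_add, gsupp hGm hα hβ]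

/-- The index set: exponents of degree at most `D`. -/
def ID (n D : ℕ) : Set (Exp n) := {τ | degE τ ≤ D}

lemma ID_finite (D : ℕ) : (ID n D).Finite := by
  classical
  have hsub : ID n D ⊆ (fun f : Fin (n+1) → Fin (D+1) =>
      (Finsupp.equivFunOnFinite.symm (fun i => (f i : ℕ)) : Exp n)) '' Set.univ := by
    intro τ hτ
    have hτ' : degE τ ≤ D := hτ
    refine ⟨fun i => ⟨τ i, ?_⟩, trivial, ?_⟩
    · have h1 : τ i ≤ degE τ := by
        classical
        by_cases h : i ∈ τ.support
        · exact Finset.single_le_sum (fun i _ => Nat.zero_le _) h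
        · simp [Finsupp.notMem_support_iff.mp h]
      omega
    · ext i
      simp [Finsupp.equivFunOnFinite]
  exact Set.Finite.subset (Set.Finite.image _ (Set.finite_univ)) hsub

noncomputable instance IDfin (D : ℕ) : Fintype (ID n D) := (ID_finite (n := n) D).fintype

open Classical in
/-- basis vectors for the endomorphism. -/
noncomputable def bD (hP : IsPommaretBasis P T) (g : Exp n → MvPolynomial (Fin (n+1)) A)
    (τ : Exp n) : MvPolynomial (Fin (n+1)) A :=
  if h : τ ∈ T then monomial (pdD hP τ h) 1 * g (pdA hP τ h) else monomial τ 1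

noncomputable def PsiD (hP : IsPommaretBasis P T) (g : Exp n → MvPolynomial (Fin (n+1)) A)
    (D : ℕ) : (↥(ID n D) →₀ A) →ₗ[A] MvPolynomial (Fin (n+1)) A :=
  Finsupp.linearCombination A (fun idx : ↥(ID n D) => bD hP g idx.1)

lemma span_notmem (hP : IsPommaretBasis P T) (g : Exp n → MvPolynomial (Fin (n+1)) A)
    (D : ℕ) (τ : Exp n) (hτ : degE τ ≤ D) (hT : τ ∉ T) :
    ∃ w : ↥(ID n D) →₀ A, PsiD hP g D w = monomial τ 1 ∧
      ∀ idx ∈ w.support, degE (idx : ↥(ID n D)).1 = degE τ := by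
  refine ⟨Finsupp.single ⟨τ, hτ⟩ 1, ?_, ?_⟩
  · classical
    rw [PsiD, Finsupp.linearCombination_single, one_smul]
    show (if h : τ ∈ T then monomial (pdD hP τ h) 1 * g (pdA hP τ h) else monomial τ 1) = _
    rw [dif_neg hT]
  · intro idx hidx
    have := Finsupp.support_single_subset hidx
    rw [Finset.mem_singleton] at this
    rw [this]

lemma span_graded (hP : IsPommaretBasis P T) {g : Exp n → MvPolynomial (Fin (n+1)) A}
    (hGm : IsMarkedSetI T P g) (D : ℕ) (τ : Exp n) (hτ : degE τ ≤ D) :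
    ∃ w : ↥(ID n D) →₀ A, PsiD hP g D w = monomial τ 1 ∧
      ∀ idx ∈ w.support, degE (idx : ↥(ID n D)).1 = degE τ := by
  classical
  by_cases hT : τ ∈ T
  · suffices H : ∀ (m : ℕ) (τ : Exp n), degE τ ≤ D → ∀ (hT : τ ∈ T), muM hP τ hT ≤ m →
        ∃ w : ↥(ID n D) →₀ A, PsiD hP g D w = monomial τ 1 ∧
          ∀ idx ∈ w.support, degE (idx : ↥(ID n D)).1 = degE τ by
      exact H (muM hP τ hT) τ hτ hT le_rfl
    clear hτ hT τ
    intro m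
    induction m using Nat.strong_induction_on with
    | _ m IH =>
    intro τ hτ hT hμ
    have hαP : pdA hP τ hT ∈ P := pdA_mem hP τ hT
    have hmultγ : multExp (pdA hP τ hT) (pdD hP τ hT) := pdD_mult hP τ hT
    have hτeq : τ = pdA hP τ hT + pdD hP τ hT := pd_eq hP τ hT
    set α := pdA hP τ hT with hαdef
    set γ := pdD hP τ hT with hγdef
    set r := monomial γ (1:A) * g α - monomial τ 1 with hr
    have hrw : r = monomial γ 1 * (g α - monomial α 1) := by
      rw [hr, mul_sub, monomial_mul, one_mul, add_comm γ α, ← hτeq]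
    have hrsupp : ∀ σ ∈ r.support, ∃ β, β ∉ T ∧ degE β = degE α ∧ σ = γ + β := by
      intro σ hσ
      rw [hrw] at hσ
      obtain ⟨β, hβ, rfl⟩ := support_monomial_mul hσ
      have := hGm α hαP β hβ
      exact ⟨β, this.1, this.2, rfl⟩
    have hsdeg : ∀ σ ∈ r.support, degE σ = degE τ := by
      intro σ hσ
      obtain ⟨β, hβT, hβd, rfl⟩ := hrsupp σ hσ
      rw [degE_add, hβd, hτeq, degE_add, add_comm]
    have hwit : ∀ σ ∈ r.support,
        ∃ w : ↥(ID n D) →₀ A, PsiD hP g D w = monomial σ 1 ∧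
          ∀ idx ∈ w.support, degE (idx : ↥(ID n D)).1 = degE σ := by
      intro σ hσ
      have hσdeg : degE σ = degE τ := hsdeg σ hσ
      obtain ⟨β, hβT, hβd, rfl⟩ := hrsupp σ hσ
      by_cases hσT : γ + β ∈ T
      · have hmuτ : muM hP τ hT = (clsF α).1 * (degE τ + 1) + γ (clsF α) := rfl
        have hlt : muM hP (γ + β) hσT < muM hP τ hT := by
          rw [hmuτ, ← hσdeg]
          exact edge hP hαP hmultγ hβT hσT
        exact IH (muM hP (γ + β) hσT) (lt_of_lt_of_le hlt hμ) (γ + β)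
          (by rw [hσdeg]; exact hτ) hσT le_rfl
      · exact span_notmem hP g D (γ + β) (by rw [hσdeg]; exact hτ) hσT
    choose wfun hw1 hw2 using hwit
    refine ⟨Finsupp.single ⟨τ, hτ⟩ 1
      - ∑ σ ∈ r.support.attach, r.coeff σ.1 • wfun σ.1 σ.2, ?_, ?_⟩
    · rw [map_sub, map_sum]
      have h1 : PsiD hP g D (Finsupp.single ⟨τ, hτ⟩ 1) = monomial γ 1 * g α := by
        rw [PsiD, Finsupp.linearCombination_single, one_smul]
        show (if h : τ ∈ T then monomial (pdD hP τ h) 1 * g (pdA hP τ h) else monomial τ 1) = _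
        rw [dif_pos hT]
      have h2 : ∀ σ ∈ r.support.attach,
          PsiD hP g D (r.coeff σ.1 • wfun σ.1 σ.2) = monomial σ.1 (r.coeff σ.1) := by
        intro σ _
        rw [map_smul, hw1 σ.1 σ.2, smul_monomial, smul_eq_mul, mul_one]
      rw [Finset.sum_congr rfl h2, h1]
      have h3 : ∑ σ ∈ r.support.attach, monomial σ.1 (r.coeff σ.1) = r := by
        rw [Finset.sum_attach r.support (fun σ => monomial σ (r.coeff σ))]
        exact r.support_sum_monomial_coeff
      rw [h3, hr]
      ring
    · intro idx hidx
      rcases Finset.mem_union.mp (Finsupp.support_sub hidx) with h | h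
      · have := Finsupp.support_single_subset h
        rw [Finset.mem_singleton] at this
        rw [this]
      · obtain ⟨σ, hσmem, hσin⟩ := Finset.mem_biUnion.mp (Finsupp.support_finset_sum h)
        have := hw2 σ.1 σ.2 idx (Finsupp.support_smul hσin)
        rw [this]
        exact hsdeg σ.1 σ.2
  · exact span_notmem hP g D τ hτ hT
end Span

section Inj
variable {A : Type*} [CommRing A] (D : ℕ)
/-- the linear map sending basis vectors to monomials -/
noncomputable def monoLC (A : Type*) [CommRing A] (D : ℕ) :
    (↥(ID n D) →₀ A) →ₗ[A] MvPolynomial (Fin (n+1)) A :=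
  Finsupp.linearCombination A (fun idx : ↥(ID n D) => monomial idx.1 (1:A))

lemma monoLC_coeff (u : ↥(ID n D) →₀ A) (idx0 : ↥(ID n D)) :
    ((monoLC A D) u).coeff idx0.1 = u idx0 := by
  classical
  rw [monoLC, Finsupp.linearCombination_apply, Finsupp.sum, coeff_sum]
  have h1 : ∀ idx ∈ u.support,
      coeff idx0.1 (u idx • monomial idx.1 (1:A)) = if idx = idx0 then u idx else 0 := by
    intro idx _
    rw [smul_monomial, smul_eq_mul, mul_one, coeff_monomial]
    by_cases h : idx = idx0
    · rw [if_pos h, if_pos (by rw [h])]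
    · rw [if_neg h, if_neg (fun hc => h (Subtype.ext hc))]
  rw [Finset.sum_congr rfl h1, Finset.sum_ite_eq' u.support idx0 (fun idx => u idx)]
  by_cases h : idx0 ∈ u.support
  · rw [if_pos h]
  · rw [if_neg h, Finsupp.notMem_support_iff.mp h]

lemma monoLC_inj : Function.Injective (monoLC A D (n := n)) := by
  rw [← LinearMap.ker_eq_bot]
  rw [Submodule.eq_bot_iff]
  intro u hu
  ext idx
  rw [← monoLC_coeff D u idx, LinearMap.mem_ker.mp hu]
  rfl
end Inj

section Span2
variable {A : Type*} [CommRing A] {T : Set (Exp n)} {P : Finset (Exp n)}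
-- ==================== new material (2) ====================

lemma PsiD_inj (hP : IsPommaretBasis P T) {g : Exp n → MvPolynomial (Fin (n+1)) A}
    (hGm : IsMarkedSetI T P g) (D : ℕ) : Function.Injective (PsiD hP g D) := by
  classical
  set W : Submodule A (MvPolynomial (Fin (n+1)) A) :=
    Submodule.span A (Set.range fun idx : ↥(ID n D) => monomial idx.1 (1:A)) with hW
  have hmemW : ∀ p : MvPolynomial (Fin (n+1)) A, (∀ δ ∈ p.support, degE δ ≤ D) → p ∈ W := by
    intro p hp
    rw [p.as_sum]
    refine Submodule.sum_mem _ ?_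
    intro δ hδ
    have h1 : monomial δ (p.coeff δ) = p.coeff δ • monomial δ (1:A) := by
      rw [smul_monomial, smul_eq_mul, mul_one]
    rw [h1]
    exact Submodule.smul_mem _ _ (Submodule.subset_span ⟨⟨δ, hp δ hδ⟩, rfl⟩)
  have hbDW : ∀ idx : ↥(ID n D), bD hP g idx.1 ∈ W := by
    intro idx
    by_cases h : idx.1 ∈ T
    · have h1 : bD hP g idx.1 = monomial (pdD hP idx.1 h) 1 * g (pdA hP idx.1 h) := dif_pos h
      rw [h1]
      refine hmemW _ ?_
      intro δ hδ
      have h2 := prodsupp hGm (pdA_mem hP idx.1 h) (pdD hP idx.1 h) hδ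
      have h3 : degE (idx : ↥(ID n D)).1 = degE (pdD hP idx.1 h) + degE (pdA hP idx.1 h) := by
        conv_lhs => rw [pd_eq hP idx.1 h]
        rw [degE_add, add_comm]
      have h4 : degE (idx : ↥(ID n D)).1 ≤ D := idx.2
      omega
    · have h1 : bD hP g idx.1 = monomial idx.1 1 := dif_neg h
      rw [h1]
      exact Submodule.subset_span ⟨idx, rfl⟩
  have hPsiW : ∀ u, PsiD hP g D u ∈ W := by
    intro u
    rw [PsiD, Finsupp.linearCombination_apply, Finsupp.sum]
    exact Submodule.sum_mem _ (fun idx _ => Submodule.smul_mem _ _ (hbDW idx))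
  have hmonoW : ∀ u, monoLC A D (n := n) u ∈ W := by
    intro u
    rw [monoLC, Finsupp.linearCombination_apply, Finsupp.sum]
    exact Submodule.sum_mem _
      (fun idx _ => Submodule.smul_mem _ _ (Submodule.subset_span ⟨idx, rfl⟩))
  let f : (↥(ID n D) →₀ A) →ₗ[A] W := (PsiD hP g D).codRestrict W hPsiW
  let i : (↥(ID n D) →₀ A) →ₗ[A] W := (monoLC A D).codRestrict W hmonoW
  have hiinj : Function.Injective i := by
    intro a b hab
    exact monoLC_inj D (congrArg Subtype.val hab)
  have hfsurj : Function.Surjective f := by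
    have hWle : W ≤ LinearMap.range (PsiD hP g D) := by
      rw [hW]
      refine Submodule.span_le.mpr ?_
      rintro y ⟨idx, rfl⟩
      obtain ⟨w, hw, -⟩ := span_graded hP hGm D idx.1 idx.2
      exact ⟨w, hw⟩
    intro y
    obtain ⟨u, hu⟩ := hWle y.2
    exact ⟨u, Subtype.ext hu⟩
  haveI hfin : Module.Finite A W := by
    rw [hW]
    exact Module.Finite.span_of_finite A (Set.finite_range _)
  have hfinj : Function.Injective f :=
    OrzechProperty.injective_of_surjective_of_injective i f hiinj hfsurj
  intro a b hab
  exact hfinj (Subtype.ext hab)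

theorem Uplus (hP : IsPommaretBasis P T) {g : Exp n → MvPolynomial (Fin (n+1)) A}
    (hGm : IsMarkedSetI T P g) (s0 : ℕ) (Q : ↥P → MvPolynomial (Fin (n+1)) A)
    (hQm : ∀ l : ↥P, multPoly (l : Exp n) (Q l))
    (h : MvPolynomial (Fin (n+1)) A)
    (hh : ∀ β ∈ h.support, degE β = s0)
    (hsum : ∑ l : ↥P, Q l * g (l : Exp n) = h) :
    ∀ l : ↥P, ∀ γ ∈ (Q l).support, degE γ + degE (l : Exp n) = s0 := by
  classical
  set D := s0 ⊔ Finset.univ.sup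
      (fun l : ↥P => (Q l).support.sup fun γ => degE (l : Exp n) + degE γ) with hD
  have hs0D : s0 ≤ D := le_sup_left
  have hDbound : ∀ (l : ↥P), ∀ γ ∈ (Q l).support, degE ((l : Exp n) + γ) ≤ D := by
    intro l γ hγ
    rw [degE_add, hD]
    have h1 : degE (l : Exp n) + degE γ
        ≤ (Q l).support.sup (fun γ => degE (l : Exp n) + degE γ) :=
      Finset.le_sup (f := fun γ => degE (l : Exp n) + degE γ) hγ
    have h2 : (Q l).support.sup (fun γ => degE (l : Exp n) + degE γ)
        ≤ Finset.univ.sup (fun l : ↥P => (Q l).support.sup fun γ => degE (l : Exp n) + degE γ) :=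
      Finset.le_sup (f := fun l : ↥P => (Q l).support.sup fun γ => degE (l : Exp n) + degE γ)
        (Finset.mem_univ l)
    exact le_trans (le_trans h1 h2) le_sup_right
  have hconeT : ∀ (l : ↥P), ∀ γ ∈ (Q l).support, (l : Exp n) + γ ∈ T := by
    intro l γ hγ
    exact (hP.1 _).mpr ⟨(l : Exp n), l.2, γ, hQm l γ hγ, rfl⟩
  set v : ↥(ID n D) →₀ A := ∑ l : ↥P, ∑ γ ∈ (Q l).support.attach,
      Finsupp.single (⟨(l : Exp n) + γ.1, hDbound l γ.1 γ.2⟩ : ↥(ID n D)) ((Q l).coeff γ.1)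
    with hv
  have hΨv : PsiD hP g D v = ∑ l : ↥P, Q l * g (l : Exp n) := by
    rw [hv, map_sum]
    refine Finset.sum_congr rfl ?_
    intro l _
    rw [map_sum]
    have h1 : ∀ γ ∈ (Q l).support.attach,
        PsiD hP g D (Finsupp.single (⟨(l : Exp n) + γ.1, hDbound l γ.1 γ.2⟩ : ↥(ID n D))
          ((Q l).coeff γ.1))
        = monomial γ.1 ((Q l).coeff γ.1) * g (l : Exp n) := by
      intro γ _
      rw [PsiD, Finsupp.linearCombination_single]
      have hmem : (l : Exp n) + γ.1 ∈ T := hconeT l γ.1 γ.2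
      have h2 : bD hP g ((l : Exp n) + γ.1)
          = monomial (pdD hP _ hmem) 1 * g (pdA hP _ hmem) := dif_pos hmem
      have h3 := pd_unique hP l.2 (hQm l γ.1 γ.2) hmem
      rw [h2, h3.1, h3.2, ← smul_mul_assoc, smul_monomial, smul_eq_mul, mul_one]
    rw [Finset.sum_congr rfl h1, ← Finset.sum_mul]
    congr 1
    rw [Finset.sum_attach (Q l).support (fun γ => monomial γ ((Q l).coeff γ))]
    exact (Q l).support_sum_monomial_coeff
  have hwit : ∀ β ∈ h.support, ∃ w : ↥(ID n D) →₀ A, PsiD hP g D w = monomial β 1 ∧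
      ∀ idx ∈ w.support, degE (idx : ↥(ID n D)).1 = degE β := by
    intro β hβ
    exact span_graded hP hGm D β (by rw [hh β hβ]; exact hs0D)
  choose wf hwf1 hwf2 using hwit
  set w := ∑ β ∈ h.support.attach, h.coeff β.1 • wf β.1 β.2 with hw
  have hΨw : PsiD hP g D w = h := by
    rw [hw, map_sum]
    have h1 : ∀ β ∈ h.support.attach,
        PsiD hP g D (h.coeff β.1 • wf β.1 β.2) = monomial β.1 (h.coeff β.1) := by
      intro β _
      rw [map_smul, hwf1 β.1 β.2, smul_monomial, smul_eq_mul, mul_one]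
    rw [Finset.sum_congr rfl h1,
      Finset.sum_attach h.support (fun β => monomial β (h.coeff β))]
    exact h.support_sum_monomial_coeff
  have hvw : v = w := PsiD_inj hP hGm D (by rw [hΨv, hsum, hΨw])
  have hwdeg : ∀ idx ∈ w.support, degE (idx : ↥(ID n D)).1 = s0 := by
    intro idx hidx
    rw [hw] at hidx
    obtain ⟨β, hβmem, hβin⟩ := Finset.mem_biUnion.mp (Finsupp.support_finset_sum hidx)
    rw [hwf2 β.1 β.2 idx (Finsupp.support_smul hβin)]
    exact hh β.1 β.2
  intro l0 γ0 hγ0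
  set idx0 : ↥(ID n D) := ⟨(l0 : Exp n) + γ0, hDbound l0 γ0 hγ0⟩ with hidx0
  have hvidx : v idx0 = (Q l0).coeff γ0 := by
    rw [hv, Finsupp.finset_sum_apply]
    have houter : ∀ l : ↥P, l ≠ l0 →
        (∑ γ ∈ (Q l).support.attach,
          Finsupp.single (⟨(l : Exp n) + γ.1, hDbound l γ.1 γ.2⟩ : ↥(ID n D))
            ((Q l).coeff γ.1)) idx0 = 0 := by
      intro l hl
      rw [Finsupp.finset_sum_apply]
      refine Finset.sum_eq_zero ?_
      intro γ _
      rw [Finsupp.single_apply, if_neg]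
      intro hc
      apply hl
      have heq : (l : Exp n) + γ.1 = (l0 : Exp n) + γ0 := congrArg Subtype.val hc
      have h1 : ((l0 : Exp n) + γ0) ∈ pommaretCone (l : Exp n) := by
        rw [← heq]; exact ⟨γ.1, hQm l γ.1 γ.2, rfl⟩
      have h2 : ((l0 : Exp n) + γ0) ∈ pommaretCone (l0 : Exp n) := ⟨γ0, hQm l0 γ0 hγ0, rfl⟩
      exact Subtype.ext (hP.2 _ _ l.2 _ l0.2 h1 h2)
    rw [Finset.sum_eq_single_of_mem l0 (Finset.mem_univ l0) (fun l _ hl => houter l hl)]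
    rw [Finsupp.finset_sum_apply]
    have hinner : ∀ γ ∈ (Q l0).support.attach, γ ≠ ⟨γ0, hγ0⟩ →
        (Finsupp.single (⟨(l0 : Exp n) + γ.1, hDbound l0 γ.1 γ.2⟩ : ↥(ID n D))
          ((Q l0).coeff γ.1)) idx0 = 0 := by
      intro γ _ hγ
      rw [Finsupp.single_apply, if_neg]
      intro hc
      apply hγ
      have heq : (l0 : Exp n) + γ.1 = (l0 : Exp n) + γ0 := congrArg Subtype.val hc
      exact Subtype.ext (add_right_injective _ heq)
    rw [Finset.sum_eq_single_of_mem (⟨γ0, hγ0⟩ : {x // x ∈ (Q l0).support})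
      (Finset.mem_attach _ _) hinner]
    rw [Finsupp.single_apply, if_pos rfl]
  have hmem : idx0 ∈ w.support := by
    rw [← hvw]
    rw [Finsupp.mem_support_iff, hvidx]
    exact mem_support_iff.mp hγ0
  have := hwdeg idx0 hmem
  rw [hidx0] at this
  simp only at this
  rw [degE_add] at this
  omega
end Span2

end AuxMB

/-- Lemma `syzmarkedset`: the module `U = ⊕_l (X_nonmult(x^{α(l)})) e_l`
is quasi-stable with Pommaret basis `{x_i e_l : x_i nonmultiplicative for x^{α(l)}}`,
and the set `G_Syz` of syzygies `S_{k;i}` is a `P(U)`-marked set. -/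
theorem statement16 {n : ℕ} {A : Type*} [CommRing A] [IsNoetherianRing A]
    (T : Set (Exp n)) (P : Finset (Exp n))
    (hT : IsMonomialIdeal T) (hP : IsPommaretBasis P T)
    (g : Exp n → MvPolynomial (Fin (n+1)) A) (hG : IsMarkedBasisI T P g)
    (Pc : ↥P → Fin (n+1) → ↥P → MvPolynomial (Fin (n+1)) A)
    (hPc : ∀ (k : ↥P) (i : Fin (n+1)), ¬ mult (k : Exp n) i →
      (X i * g (k : Exp n) = ∑ l : ↥P, Pc k i l * g (l : Exp n)) ∧
      ∀ l : ↥P, multPoly (l : Exp n) (Pc k i l)) :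
    (∀ l : ↥P, IsMonomialIdeal (Jsyz P l) ∧ IsPommaretBasis (Psyz P l) (Jsyz P l)) ∧
    ∃ gs : Exp n → ↥P → (↥P → MvPolynomial (Fin (n+1)) A),
      IsMarkedSetV (ddeg P) (Jsyz P) (Psyz P) gs ∧
      ∀ (k : ↥P) (i : Fin (n+1)), ¬ mult (k : Exp n) i →
        gs (Finsupp.single i 1) k = Ssyz P Pc k i := by
  classical
  have hGm : IsMarkedSetI T P g := hG.1
  constructor
  · intro l
    exact partA (l : Exp n)
  · set gs : Exp n → ↥P → (↥P → MvPolynomial (Fin (n+1)) A) := fun α k =>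
      if h : ∃ i, ¬ mult (k : Exp n) i ∧ α = Finsupp.single i 1
      then Ssyz P Pc k h.choose else 0 with hgsdef
    have hgseq : ∀ (k : ↥P) (i : Fin (n+1)), ¬ mult (k : Exp n) i →
        gs (Finsupp.single i 1) k = Ssyz P Pc k i := by
      intro k i hnm
      have hex : ∃ i', ¬ mult (k : Exp n) i' ∧
          (Finsupp.single i 1 : Exp n) = Finsupp.single i' 1 := ⟨i, hnm, rfl⟩
      rw [hgsdef]
      simp only
      rw [dif_pos hex]
      obtain ⟨hnm', heq⟩ := hex.choose_spec
      have hii : hex.choose = i :=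
        (Finsupp.single_left_injective (one_ne_zero (α := ℕ)) heq.symm)
      rw [hii]
    refine ⟨gs, ?_, hgseq⟩
    intro k α hα l β hβ
    obtain ⟨i, hifil, hsingle⟩ := Finset.mem_image.mp hα
    have hinm : ¬ mult (k : Exp n) i := (Finset.mem_filter.mp hifil).2
    subst hsingle
    have hcomp : (gs (Finsupp.single i 1) k - termV A (Finsupp.single i 1) k) l
        = - Pc k i l := by
      rw [Pi.sub_apply, hgseq k i hinm, Ssyz, termV]
      by_cases hlk : l = k
      · subst hlk
        rw [if_pos rfl, Pi.single_eq_same]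
        have hX : (X i : MvPolynomial (Fin (n+1)) A) = monomial (Finsupp.single i 1) 1 := rfl
        rw [hX]
        ring
      · rw [if_neg hlk, Pi.single_eq_of_ne hlk]
        ring
    rw [hcomp, MvPolynomial.support_neg] at hβ
    constructor
    · rintro ⟨i', hi'supp, hi'nm⟩
      exact hi'nm ((hPc k i hinm).2 l β hβ i' hi'supp)
    · have hh : ∀ δ ∈ (X i * g (k : Exp n)).support, degE δ = 1 + degE (k : Exp n) := by
        intro δ hδ
        have hX : (X i : MvPolynomial (Fin (n+1)) A) = monomial (Finsupp.single i 1) 1 := rfl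
        rw [hX] at hδ
        have := prodsupp hGm k.2 (Finsupp.single i 1) hδ
        rwa [degE_single] at this
      have hU := Uplus hP hGm (1 + degE (k : Exp n)) (Pc k i) (hPc k i hinm).2
        (X i * g (k : Exp n)) hh (hPc k i hinm).1.symm l β hβ
      rw [ddeg, ddeg, degE_single]
      push_cast
      omega

end MB
end
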